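/- Let d ≥ 2, n ≥ 1, κ > 0, and let (V, u) be the stabilizing pair of BS(n·δ₀, κ). Let B ⊆ V contain the origin in its interior B°, and let v : ℤ^d → ℝ vanish outside B° ∪ ∂B = B and satisfy Δv ≥ −n·δ₀ on B°, v = 0 on ∂B, and Δv > κ on ∂B. Then ∂B ∩ ∂V = ∅. -/
import Mathlib


open Filter

namespace Sandpile

/-- Lattice sites of `ℤ^d`. -/
abbrev Site (d : ℕ) := Fin d → ℤ

/-- Two sites are neighbours iff their `ℓ¹`-distance equals `1`. -/
def nbr {d : ℕ} (x y : Site d) : Prop := (∑ i, |x i - y i|) = 1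

/-- The (combinatorial) boundary of a set `V ⊆ ℤ^d`. -/
def bdry {d : ℕ} (V : Set (Site d)) : Set (Site d) :=
  {x | x ∈ V ∧ ∃ y, nbr x y ∧ y ∉ V}

/-- The (combinatorial) interior of a set `V ⊆ ℤ^d`. -/
def intr {d : ℕ} (V : Set (Site d)) : Set (Site d) := V \ bdry V

/-- The discrete Laplacian `Δu(x) = (1/(2d)) ∑_{y ∼ x} (u y - u x)`; the `2d`
neighbours of `x` are exactly the points `x ± eᵢ`. -/
noncomputable def lap {d : ℕ} (u : Site d → ℝ) (x : Site d) : ℝ :=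
  (1 / (2 * (d : ℝ))) *
    ∑ i : Fin d, ((u (x + Pi.single i 1) - u x) + (u (x - Pi.single i 1) - u x))

/-- A mass distribution: nonnegative with finite support. -/
def IsMassDist {d : ℕ} (μ : Site d → ℝ) : Prop :=
  (∀ x, 0 ≤ μ x) ∧ (Function.support μ).Finite

/-- Euclidean norm of a lattice point. -/
noncomputable def enorm {d : ℕ} (x : Site d) : ℝ :=
  Real.sqrt (∑ i, ((x i : ℝ)) ^ 2)

/-- `(V, u)` is a stabilizing pair for `BS(μ₀, κ)`: `V` is finite, contains the support
of `μ₀`, and `u : ℤ^d → [0,∞)` vanishes outside the interior of `V`, satisfies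
`Δu = -μ₀` on the interior of `V`, `u = 0` on `∂V`, and `μ₀ + Δu ≤ κ` on `∂V`. -/
def IsStabilizingPair {d : ℕ} (μ0 : Site d → ℝ) (κ : ℝ)
    (V : Set (Site d)) (u : Site d → ℝ) : Prop :=
  V.Finite ∧ Function.support μ0 ⊆ V ∧ (∀ x, 0 ≤ u x) ∧
  (∀ x ∉ intr V, u x = 0) ∧
  (∀ x ∈ intr V, lap u x = -μ0 x) ∧
  (∀ x ∈ bdry V, u x = 0) ∧
  (∀ x ∈ bdry V, μ0 x + lap u x ≤ κ)

/-- *The* stabilizing pair of `BS(μ₀, κ)`: a stabilizing pair whose set of sites is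
contained in the set of any other stabilizing pair. -/
def IsMinStabilizingPair {d : ℕ} (μ0 : Site d → ℝ) (κ : ℝ)
    (V : Set (Site d)) (u : Site d → ℝ) : Prop :=
  IsStabilizingPair μ0 κ V u ∧
  ∀ V' u', IsStabilizingPair μ0 κ V' u' → V ⊆ V'

/-- The point mass `n·δ₀` at the origin. -/
def pointMass (d : ℕ) (n : ℝ) : Site d → ℝ := fun x => if x = 0 then n else 0

lemma nbr_add {d : ℕ} (x : Site d) (i : Fin d) : nbr x (x + Pi.single i 1) := by
  unfold nbr
  have h : ∀ j : Fin d, |x j - (x + Pi.single i 1 : Site d) j| = if j = i then 1 else 0 := by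
    intro j
    simp only [Pi.add_apply, Pi.single_apply]
    split <;> simp
  rw [Finset.sum_congr rfl (fun j _ => h j)]
  simp

lemma nbr_sub {d : ℕ} (x : Site d) (i : Fin d) : nbr x (x - Pi.single i 1) := by
  unfold nbr
  have h : ∀ j : Fin d, |x j - (x - Pi.single i 1 : Site d) j| = if j = i then 1 else 0 := by
    intro j
    simp only [Pi.sub_apply, Pi.single_apply]
    split <;> simp
  rw [Finset.sum_congr rfl (fun j _ => h j)]
  simp

lemma mem_of_intr {d : ℕ} {B : Set (Site d)} {x y : Site d}
    (hx : x ∈ intr B) (h : nbr x y) : y ∈ B := by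
  by_contra hy
  exact hx.2 ⟨hx.1, y, h, hy⟩

lemma intr_subset_intr {d : ℕ} {B V : Set (Site d)} (h : B ⊆ V) :
    intr B ⊆ intr V := by
  intro x hx
  refine ⟨h hx.1, fun hb => ?_⟩
  obtain ⟨_, y, hnbr, hy⟩ := hb
  exact hy (h (mem_of_intr hx hnbr))

lemma lap_sub {d : ℕ} (u v : Site d → ℝ) (x : Site d) :
    lap (fun y => u y - v y) x = lap u x - lap v x := by
  unfold lap
  rw [← mul_sub, ← Finset.sum_sub_distrib]
  congr 1
  apply Finset.sum_congr rfl
  intros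
  ring

/-- Discrete minimum principle on a finite set. -/
lemma min_principle {d : ℕ} (hd : 2 ≤ d) {B : Set (Site d)} (hfin : B.Finite)
    (hne : B.Nonempty) (w : Site d → ℝ)
    (hsup : ∀ x ∈ intr B, lap w x ≤ 0)
    (hbd : ∀ x ∈ bdry B, 0 ≤ w x) :
    ∀ x ∈ B, 0 ≤ w x := by
  classical
  have hd0 : (0 : ℝ) < (d : ℝ) := by
    have : 0 < d := by omega
    exact_mod_cast this
  have hc : (0 : ℝ) < 1 / (2 * (d : ℝ)) := by positivity
  set F := hfin.toFinset with hF
  have hFne : F.Nonempty := by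
    obtain ⟨x, hx⟩ := hne
    exact ⟨x, hfin.mem_toFinset.mpr hx⟩
  obtain ⟨x₀, hx₀F, hx₀min⟩ := Finset.exists_min_image F w hFne
  -- it suffices to show 0 ≤ w x₀
  suffices h : 0 ≤ w x₀ by
    intro x hx
    exact h.trans (hx₀min x (hfin.mem_toFinset.mpr hx))
  set i0 : Fin d := ⟨0, by omega⟩ with hi0
  set M : Finset (Site d) := F.filter (fun z => w z = w x₀) with hM
  have hMne : M.Nonempty := ⟨x₀, by simp [hM, hx₀F]⟩
  obtain ⟨z, hzM, hzmax⟩ := Finset.exists_max_image M (fun z => z i0) hMne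
  have hzF : z ∈ F := (Finset.mem_filter.mp hzM).1
  have hzw : w z = w x₀ := (Finset.mem_filter.mp hzM).2
  have hzB : z ∈ B := hfin.mem_toFinset.mp hzF
  by_cases hzbd : z ∈ bdry B
  · have := hbd z hzbd
    linarith [hzw]
  · -- z is interior; propagate minimum to z + e₀, contradicting maximality
    have hzint : z ∈ intr B := ⟨hzB, hzbd⟩
    have hlapz := hsup z hzint
    set S := ∑ i : Fin d, ((w (z + Pi.single i 1) - w z) + (w (z - Pi.single i 1) - w z))
      with hS
    have hterm : ∀ i : Fin d,
        0 ≤ (w (z + Pi.single i 1) - w z) + (w (z - Pi.single i 1) - w z) := by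
      intro i
      have h1 : z + Pi.single i 1 ∈ B := mem_of_intr hzint (nbr_add z i)
      have h2 : z - Pi.single i 1 ∈ B := mem_of_intr hzint (nbr_sub z i)
      have := hx₀min _ (hfin.mem_toFinset.mpr h1)
      have := hx₀min _ (hfin.mem_toFinset.mpr h2)
      linarith [hzw]
    have hS0 : 0 ≤ S := Finset.sum_nonneg fun i _ => hterm i
    have hSle : S ≤ 0 := by
      by_contra h
      push_neg at h
      have := mul_pos hc h
      unfold lap at hlapz
      rw [← hS] at hlapz
      linarith
    have hSeq : S = 0 := le_antisymm hSle hS0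
    have hall := (Finset.sum_eq_zero_iff_of_nonneg (fun i _ => hterm i)).mp hSeq
    have hi0term := hall i0 (Finset.mem_univ i0)
    -- each part nonneg and sum zero
    have h1 : z + Pi.single i0 1 ∈ B := mem_of_intr hzint (nbr_add z i0)
    have h2 : z - Pi.single i0 1 ∈ B := mem_of_intr hzint (nbr_sub z i0)
    have ha : w x₀ ≤ w (z + Pi.single i0 1) := hx₀min _ (hfin.mem_toFinset.mpr h1)
    have hb : w x₀ ≤ w (z - Pi.single i0 1) := hx₀min _ (hfin.mem_toFinset.mpr h2)
    have heq : w (z + Pi.single i0 1) = w x₀ := by linarith [hzw]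
    have hmem : z + Pi.single i0 1 ∈ M := by
      refine Finset.mem_filter.mpr ⟨hfin.mem_toFinset.mpr h1, heq⟩
    have := hzmax _ hmem
    simp only [Pi.add_apply, Pi.single_eq_same] at this
    omega

/-- Let `d ≥ 2`, `n ≥ 1`, `κ > 0`, and `(V, u)` the stabilizing pair
of `BS(n·δ₀, κ)`. Let `B ⊆ V` contain the origin in its interior, and let
`v : ℤ^d → ℝ` vanish outside `B` and satisfy `Δv ≥ -n·δ₀` on `B°`, `v = 0` on `∂B`,
and `Δv > κ` on `∂B`. Then `∂B ∩ ∂V = ∅`. -/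
theorem stmt14 {d : ℕ} (hd : 2 ≤ d) (n κ : ℝ) (hn : 1 ≤ n) (hκ : 0 < κ)
    (V : Set (Site d)) (u : Site d → ℝ)
    (hpair : IsMinStabilizingPair (pointMass d n) κ V u)
    (B : Set (Site d)) (hBV : B ⊆ V) (h0 : (0 : Site d) ∈ intr B)
    (v : Site d → ℝ)
    (hvout : ∀ x ∉ B, v x = 0)
    (hvlap : ∀ x ∈ intr B, -(pointMass d n x) ≤ lap v x)
    (hvbd : ∀ x ∈ bdry B, v x = 0)
    (hvbig : ∀ x ∈ bdry B, κ < lap v x) :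
    bdry B ∩ bdry V = ∅ := by
  classical
  obtain ⟨⟨hVfin, hsupp, hupos, huout, hulap, hubd, huκ⟩, _⟩ := hpair
  have hBfin : B.Finite := hVfin.subset hBV
  have hBne : B.Nonempty := ⟨0, h0.1⟩
  -- u - v is superharmonic on intr B and nonneg on bdry B
  have hvu : ∀ x ∈ B, 0 ≤ u x - v x := by
    apply min_principle hd hBfin hBne
    · intro x hx
      rw [lap_sub]
      have h1 : lap u x = -(pointMass d n x) := hulap x (intr_subset_intr hBV hx)
      have h2 := hvlap x hx
      linarith
    · intro x hx
      have := hvbd x hx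
      have := hupos x
      linarith
  rw [Set.eq_empty_iff_forall_notMem]
  rintro x ⟨hxB, hxV⟩
  have hx0 : x ≠ 0 := by
    rintro rfl
    exact h0.2 hxB
  have hμ : pointMass d n x = 0 := by simp [pointMass, hx0]
  have hulapκ : lap u x ≤ κ := by
    have := huκ x hxV
    linarith [hμ.symm ▸ this]
  have hvlapκ : κ < lap v x := hvbig x hxB
  have hux : u x = 0 := hubd x hxV
  have hvx : v x = 0 := hvbd x hxB
  -- lap v x ≤ lap u x
  have hkey : lap v x ≤ lap u x := by
    have hd0 : (0 : ℝ) < (d : ℝ) := by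
      have : 0 < d := by omega
      exact_mod_cast this
    have hc : (0 : ℝ) ≤ 1 / (2 * (d : ℝ)) := by positivity
    have hdiff : 0 ≤ lap u x - lap v x := by
      rw [← lap_sub]
      unfold lap
      apply mul_nonneg hc
      apply Finset.sum_nonneg
      intro i _
      have hterm : ∀ y : Site d, 0 ≤ u y - v y := by
        intro y
        by_cases hy : y ∈ B
        · exact hvu y hy
        · rw [hvout y hy]
          simpa using hupos y
      have h1 := hterm (x + Pi.single i 1)
      have h2 := hterm (x - Pi.single i 1)
      dsimp only
      rw [hux, hvx]
      linarith
    linarith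
  linarith

end Sandpile
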